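/- arXiv:1203.1997 — 3 statements merged into one kernel-verified Lean document; each statement's English description precedes it below -/
import Mathlib

section
/- Fix a network (K, G) with fading structure π and a nonempty L ⊆ K. Then σ*_L(π) equals the optimal value of the following optimization problem: maximize Σ_{J⊆L} π_L(J)·a(J) over all x ∈ ℝ^L with x ≥ 0 and all families of reals (a(J))_{J⊆L}, (b(J))_{J⊆L} subject to: for every J ⊆ L and every vector m ∈ M_{J,L}, ⟨x, m⟩ ≥ a(J) and ⟨x, m⟩ ≤ b(J); and Σ_{J⊆L} π_L(J)·b(J) = 1. -/
open scoped BigOperators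
open Filter MeasureTheory ProbabilityTheory

/-- `S` is an independent set of the interference graph `G` contained in the
set of links `J` (pairwise non-adjacent links). -/
def IsIndepIn {V : Type*} (G : SimpleGraph V) (J S : Finset V) : Prop :=
  S ⊆ J ∧ ∀ u ∈ S, ∀ v ∈ S, ¬ G.Adj u v

/-- `S` is a maximal independent set of `J`. -/
def IsMaxIndepIn {V : Type*} (G : SimpleGraph V) (J S : Finset V) : Prop :=
  IsIndepIn G J S ∧ ∀ T, IsIndepIn G J T → S ⊆ T → S = T

/-- 0/1 indicator vector of a finite set of links. -/
def indVec {V : Type*} [DecidableEq V] (S : Finset V) : V → ℝ :=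
  fun v => if v ∈ S then 1 else 0

/-- `M_{J,L}` : the (finite) set of 0/1 indicator vectors of the maximal independent
sets of `J`; the vectors are encoded in the ambient space `ℝ^V`, coordinates outside `J`
are automatically `0`. -/
def Mset {V : Type*} [DecidableEq V] (G : SimpleGraph V) (J : Finset V) : Set (V → ℝ) :=
  indVec '' {S | IsMaxIndepIn G J S}

/-- `CH(M_{J,L})` : the convex hull of `M_{J,L}`. -/
noncomputable def CHM {V : Type*} [DecidableEq V] (G : SimpleGraph V) (J : Finset V) :
    Set (V → ℝ) :=
  convexHull ℝ (Mset G J)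

/-- A fading structure `π` on the set of links: nonnegative weights summing to one. -/
def IsFading {V : Type*} [Fintype V] [DecidableEq V] (π : Finset V → ℝ) : Prop :=
  (∀ J, 0 ≤ π J) ∧ ∑ J : Finset V, π J = 1

/-- `Φ(L) = { Σ_{J ⊆ K} π(J) η_J : η_J ∈ CH(M_{J∩L,L}) }`. -/
def Phi {V : Type*} [Fintype V] [DecidableEq V] (G : SimpleGraph V) (π : Finset V → ℝ)
    (L : Finset V) : Set (V → ℝ) :=
  {φ | ∃ η : Finset V → V → ℝ, (∀ J, η J ∈ CHM G (J ∩ L)) ∧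
    φ = ∑ J : Finset V, π J • η J}

/-- The fading local pooling factor `σ*_L(π)` of a set of links `L`. -/
noncomputable def sigmaL {V : Type*} [Fintype V] [DecidableEq V] (G : SimpleGraph V)
    (π : Finset V → ℝ) (L : Finset V) : ℝ :=
  sInf {σ : ℝ | 0 ≤ σ ∧ ∃ φ1 ∈ Phi G π L, ∃ φ2 ∈ Phi G π L, ∀ v ∈ L, φ2 v ≤ σ * φ1 v}

/-- The Fading-LPF `σ*_G(π)` of the network: minimum of `σ*_L(π)` over nonempty `L ⊆ K`. -/
noncomputable def sigmaG {V : Type*} [Fintype V] [DecidableEq V] (G : SimpleGraph V)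
    (π : Finset V → ℝ) : ℝ :=
  sInf (sigmaL G π '' {L : Finset V | L.Nonempty})
/-- The marginal distribution `π_L` induced on a subset of links `L`. -/
noncomputable def marginal {V : Type*} [Fintype V] [DecidableEq V] (π : Finset V → ℝ)
    (L J : Finset V) : ℝ :=
  ∑ I : Finset V, if I ∩ L = J then π I else 0

/-- `n(M_J)`: minimum cardinality of a maximal independent set of `J`. -/
noncomputable def nM {V : Type*} (G : SimpleGraph V) (J : Finset V) : ℕ :=
  sInf (Finset.card '' {S | IsMaxIndepIn G J S})

/-- `N(M_J)`: maximum cardinality of a maximal independent set of `J`. -/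
noncomputable def NM {V : Type*} (G : SimpleGraph V) (J : Finset V) : ℕ :=
  sSup (Finset.card '' {S | IsMaxIndepIn G J S})

/-- interference degree of a link `l`: maximum cardinality of an independent set of `G`
contained in the closed neighborhood of `l`. -/
noncomputable def dI {V : Type*} (G : SimpleGraph V) (l : V) : ℕ :=
  sSup (Finset.card '' {S : Finset V | (∀ u ∈ S, ∀ v ∈ S, ¬ G.Adj u v) ∧
    ∀ v ∈ S, v = l ∨ G.Adj l v})

/-- interference degree `d_I(G)` of the whole interference graph. -/
noncomputable def dIG {V : Type*} (G : SimpleGraph V) : ℕ :=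
  sSup (Set.range (dI G))

/-- interference degree `d_I(S)` of the subgraph of `G` induced on the set of links `S`. -/
noncomputable def dISet {V : Type*} (G : SimpleGraph V) (Sset : Finset V) : ℕ :=
  sSup (Finset.card '' {T : Finset V | T ⊆ Sset ∧ (∀ u ∈ T, ∀ v ∈ T, ¬ G.Adj u v) ∧
    ∃ l ∈ Sset, ∀ v ∈ T, v = l ∨ G.Adj l v})

/-- The throughput region `Λ_f`. -/
def LambdaF {V : Type*} [Fintype V] [DecidableEq V] (G : SimpleGraph V) (π : Finset V → ℝ) :
    Set (V → ℝ) :=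
  {lam | (∀ v, 0 < lam v) ∧ ∃ η : Finset V → V → ℝ,
    (∀ J, η J ∈ CHM G J) ∧ ∀ v, lam v ≤ ∑ J : Finset V, π J * η J v}

/-- The scaled region `Λ_f(x)`. -/
def LambdaX {V : Type*} [Fintype V] [DecidableEq V] (G : SimpleGraph V) (π : Finset V → ℝ)
    (x : Finset V → ℝ) : Set (V → ℝ) :=
  {lam | (∀ v, 0 < lam v) ∧ ∃ η : Finset V → V → ℝ,
    (∀ J, η J ∈ CHM G J) ∧ ∀ v, lam v ≤ ∑ J : Finset V, x J * π J * η J v}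

/-- The standard (non-fading) local pooling factor of a graph `H`. -/
noncomputable def stdLPF (W : Type*) [Fintype W] [DecidableEq W] (H : SimpleGraph W) : ℝ :=
  sInf ((fun L => sInf {σ : ℝ | 0 ≤ σ ∧ ∃ φ1 ∈ CHM H L, ∃ φ2 ∈ CHM H L,
    ∀ v ∈ L, φ2 v ≤ σ * φ1 v}) '' {L : Finset W | L.Nonempty})

/-- discrete measurable structure on global channel states -/
instance {α : Type*} : MeasurableSpace (Finset α) := ⊤

/-- The queue-length process `Q` evolves according to
`Q_l[t+1] = (Q_l[t] − C_l[t]·1{l ∈ S[t]})⁺ + A_l[t]`, `Q_l[0] = 0`,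
where `GS t ω` is the set of 'ON' links and `S t ω` is the schedule. -/
def QueueEvol {V : Type*} [DecidableEq V] {Ω : Type*} (A : ℕ → V → Ω → ℕ)
    (GS S : ℕ → Ω → Finset V) (Q : ℕ → V → Ω → ℕ) : Prop :=
  (∀ l ω, Q 0 l ω = 0) ∧
  ∀ t l ω, Q (t + 1) l ω =
    (Q t l ω - (if l ∈ GS t ω ∧ l ∈ S t ω then 1 else 0)) + A t l ω

/-- `S` is a greedy maximal schedule for the weights `w`: a maximal independent set of `G`
with an enumeration `s_0, …, s_{k-1}` such that each `s_i` has maximal weight among the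
links neither equal nor adjacent to any of `s_0, …, s_{i-1}`. -/
def IsGreedySchedule {V : Type*} [Fintype V] [DecidableEq V] (G : SimpleGraph V)
    (w : V → ℝ) (S : Finset V) : Prop :=
  IsMaxIndepIn G Finset.univ S ∧
  ∃ s : ℕ → V, S = (Finset.range S.card).image s ∧
    (∀ i < S.card, ∀ j < S.card, s i = s j → i = j) ∧
    ∀ i < S.card, ∀ v : V, (∀ j < i, v ≠ s j ∧ ¬ G.Adj v (s j)) → w v ≤ w (s i)

/-- A GMS policy: at every time and in every sample point, the schedule is a greedy
maximal schedule for the weights `w_l = Q_l[t]·C_l[t]`. -/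
def IsGMSPolicy {V : Type*} [Fintype V] [DecidableEq V] {Ω : Type*} (G : SimpleGraph V)
    (GS S : ℕ → Ω → Finset V) (Q : ℕ → V → Ω → ℕ) : Prop :=
  ∀ t ω, IsGreedySchedule G
    (fun l => (Q t l ω : ℝ) * (if l ∈ GS t ω then 1 else 0)) (S t ω)

/-!
Weak duality: if `(x, a, b)` is feasible and `φ₂ ≤ σ φ₁` on `L`, the constraints give
`∑ π_L a ≤ ⟨x, φ₂⟩ ≤ σ ⟨x, φ₁⟩ ≤ σ ∑ π_L b = σ`, since every element of `Φ(L)` is a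
`π`-average of points of the hulls `CH(M_{J∩L,L})` and vanishes off `L`.

Strong duality: if `σ < σ*_L(π)`, the compact convex set `Φ(L) - σ Φ(L)` misses the cone of
vectors that are nonpositive on `L`, and a separating functional yields `x ≥ 0` with
`σ ⟨x, φ₁⟩ < ⟨x, φ₂⟩` for all `φ₁, φ₂ ∈ Φ(L)`. Choosing `a(J)` and `b(J)` as the minimum and
maximum of `⟨x, m⟩` over `M_{J,L}`, and `φ₂`, `φ₁` as the points of `Φ(L)` built from the
minimisers and maximisers, gives `σ ∑ π_L b < ∑ π_L a`; dividing by `∑ π_L b` produces a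
feasible point of value larger than `σ`.
-/

section MaximalIndependentSets

variable {V : Type*}

lemma exists_isMaxIndepIn (G : SimpleGraph V) (J : Finset V) : ∃ S, IsMaxIndepIn G J S := by
  have hfin : {S | IsIndepIn G J S}.Finite :=
    J.powerset.finite_toSet.subset fun S hS => Finset.mem_powerset.2 hS.1
  obtain ⟨S, -, hS⟩ := hfin.exists_le_maximal (a := ∅) ⟨Finset.empty_subset J, by simp⟩
  exact ⟨S, hS.1, fun T hT hST => le_antisymm hST (hS.2 hT hST)⟩

variable [DecidableEq V] {G : SimpleGraph V} {J : Finset V} {m y : V → ℝ} {v : V}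

lemma Mset_nonempty (G : SimpleGraph V) (J : Finset V) : (Mset G J).Nonempty :=
  let ⟨S, hS⟩ := exists_isMaxIndepIn G J
  ⟨_, S, hS, rfl⟩

lemma Mset_finite (G : SimpleGraph V) (J : Finset V) : (Mset G J).Finite :=
  (J.powerset.finite_toSet.subset fun S (hS : IsMaxIndepIn G J S) =>
    Finset.mem_powerset.2 hS.1.1).image indVec

lemma nonneg_of_mem_Mset (hm : m ∈ Mset G J) : 0 ≤ m := by
  obtain ⟨S, -, rfl⟩ := hm
  intro v
  unfold indVec
  split_ifs <;> norm_num

lemma apply_eq_zero_of_mem_Mset (hm : m ∈ Mset G J) (hv : v ∉ J) : m v = 0 := by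
  obtain ⟨S, hS, rfl⟩ := hm
  have hvS : v ∉ S := fun h => hv (hS.1.1 h)
  simp [indVec, hvS]

lemma apply_eq_zero_of_mem_CHM (hy : y ∈ CHM G J) (hv : v ∉ J) : y v = 0 :=
  convexHull_min (fun _ hm => apply_eq_zero_of_mem_Mset hm hv)
    (convex_hyperplane (LinearMap.proj v : (V → ℝ) →ₗ[ℝ] ℝ).isLinear 0) hy

variable [Fintype V] {x : V → ℝ}

lemma le_dotProduct_of_mem_CHM {α : ℝ} (h : ∀ m ∈ Mset G J, α ≤ x ⬝ᵥ m) (hy : y ∈ CHM G J) :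
    α ≤ x ⬝ᵥ y :=
  convexHull_min h (convex_halfSpace_ge (dotProductBilin ℝ ℝ x).isLinear α) hy

end MaximalIndependentSets

section Pooling

variable {V : Type*} [Fintype V] [DecidableEq V] {G : SimpleGraph V} {π : Finset V → ℝ}
  {L : Finset V}

lemma Phi_eq_image (G : SimpleGraph V) (π : Finset V → ℝ) (L : Finset V) :
    Phi G π L = (∑ J, π J • LinearMap.proj J : (Finset V → V → ℝ) →ₗ[ℝ] V → ℝ) ''
      Set.univ.pi fun J => CHM G (J ∩ L) := by
  ext φ
  simp [Phi, eq_comm]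

lemma convex_Phi (G : SimpleGraph V) (π : Finset V → ℝ) (L : Finset V) :
    Convex ℝ (Phi G π L) := by
  rw [Phi_eq_image]
  exact (convex_pi fun J _ => convex_convexHull ℝ _).linear_image _

lemma isCompact_Phi (G : SimpleGraph V) (π : Finset V → ℝ) (L : Finset V) :
    IsCompact (Phi G π L) := by
  rw [Phi_eq_image]
  exact (isCompact_univ_pi fun J => (Mset_finite G _).isCompact_convexHull (𝕜 := ℝ)).image
    (LinearMap.continuous_of_finiteDimensional _)

lemma sum_smul_mem_Phi {m : Finset V → V → ℝ} (hm : ∀ J, m J ∈ Mset G J) :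
    ∑ I, π I • m (I ∩ L) ∈ Phi G π L :=
  ⟨fun I => m (I ∩ L), fun _ => subset_convexHull ℝ _ (hm _), rfl⟩

lemma Phi_nonempty (G : SimpleGraph V) (π : Finset V → ℝ) (L : Finset V) :
    (Phi G π L).Nonempty := by
  choose m hm using Mset_nonempty G
  exact ⟨_, sum_smul_mem_Phi hm⟩

lemma apply_eq_zero_of_mem_Phi {φ : V → ℝ} (hφ : φ ∈ Phi G π L) {v : V} (hv : v ∉ L) :
    φ v = 0 := by
  obtain ⟨η, hη, rfl⟩ := hφ
  simp [Finset.sum_apply, apply_eq_zero_of_mem_CHM (hη _) (fun h => hv (Finset.mem_inter.1 h).2)]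

lemma sum_marginal_mul (π : Finset V → ℝ) (L : Finset V) (c : Finset V → ℝ) :
    ∑ J ∈ L.powerset, marginal π L J * c J = ∑ I, π I * c (I ∩ L) := by
  simp only [marginal, Finset.sum_mul, ite_mul, zero_mul]
  rw [Finset.sum_comm]
  refine Finset.sum_congr rfl fun I _ => ?_
  rw [Finset.sum_ite_eq L.powerset (I ∩ L) (fun J => π I * c J)]
  simp [Finset.inter_subset_right]

lemma marginal_nonneg (hπ : ∀ J, 0 ≤ π J) (L J : Finset V) : 0 ≤ marginal π L J :=
  Finset.sum_nonneg fun I _ => by split_ifs <;> simp [hπ I]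

lemma sum_marginal (hπ : ∑ J, π J = 1) (L : Finset V) : ∑ J ∈ L.powerset, marginal π L J = 1 := by
  simpa [hπ] using sum_marginal_mul π L 1

lemma dotProduct_sum_smul_inter (x : V → ℝ) (π : Finset V → ℝ) (L : Finset V)
    (η : Finset V → V → ℝ) :
    x ⬝ᵥ ∑ I, π I • η (I ∩ L) = ∑ J ∈ L.powerset, marginal π L J * x ⬝ᵥ η J := by
  simp [dotProduct_sum, dotProduct_smul, sum_marginal_mul π L (fun J => x ⬝ᵥ η J)]

end Pooling

lemma exists_nonneg_dotProduct_pos {V : Type*} [Fintype V] [DecidableEq V] {A : Set (V → ℝ)}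
    (hconv : Convex ℝ A) (hcomp : IsCompact A) (L : Finset V) (hA : ∀ z ∈ A, ∃ v ∈ L, 0 < z v) :
    ∃ x : V → ℝ, 0 ≤ x ∧ ∀ z ∈ A, 0 < x ⬝ᵥ z := by
  set B : Set (V → ℝ) := ⋂ v ∈ L, {z | z v ≤ 0}
  have hBconv : Convex ℝ B :=
    convex_iInter₂ fun v _ => convex_halfSpace_le (LinearMap.proj v : (V → ℝ) →ₗ[ℝ] ℝ).isLinear 0
  have hBclosed : IsClosed B :=
    isClosed_biInter fun v _ => isClosed_le (continuous_apply v) continuous_const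
  have hdisj : Disjoint A B := Set.disjoint_left.2 fun z hzA hzB =>
    let ⟨v, hv, hpos⟩ := hA z hzA
    (Set.mem_iInter₂.1 hzB v hv).not_gt hpos
  obtain ⟨f, u, w, hfA, huw, hfB⟩ :=
    geometric_hahn_banach_compact_closed hconv hcomp hBconv hBclosed hdisj
  have hw : w < 0 := by simpa using hfB 0 (by simp [B])
  -- `B` is a cone, so a functional bounded below on it is nonnegative on it
  have hfB_nonneg : ∀ z ∈ B, 0 ≤ f z := by
    intro z hz
    by_contra! hneg
    have hmem : (w / f z) • z ∈ B := by
      simp only [B, Set.mem_iInter₂, Set.mem_ofPred_eq] at hz ⊢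
      exact fun v hv =>
        smul_nonpos_of_nonneg_of_nonpos (div_nonneg_of_nonpos hw.le hneg.le) (hz v hv)
    have := hfB _ hmem
    rw [map_smul, smul_eq_mul, div_mul_cancel₀ _ hneg.ne] at this
    exact this.false
  set e : V → V → ℝ := fun v j => if v = j then 1 else 0
  refine ⟨fun v => -f (e v), fun v => ?_, fun z hz => ?_⟩
  · change 0 ≤ -f (e v)
    rw [← map_neg]
    refine hfB_nonneg _ (Set.mem_iInter₂.2 fun j _ => ?_)
    simp only [e, Set.mem_ofPred_eq, Pi.neg_apply]
    split_ifs <;> norm_num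
  · have hfz : f z = ∑ v, z v • f (e v) := f.toLinearMap.pi_apply_eq_sum_univ z
    have hdot : (fun v => -f (e v)) ⬝ᵥ z = -f z := by
      simp [dotProduct, hfz, mul_comm]
    linarith [hfA z hz]

section Duality

variable {V : Type*} [Fintype V] [DecidableEq V] {G : SimpleGraph V} {π : Finset V → ℝ}
  {L : Finset V} {x : V → ℝ} {a b : Finset V → ℝ}

open scoped Pointwise

def poolingFactors (G : SimpleGraph V) (π : Finset V → ℝ) (L : Finset V) : Set ℝ :=
  {σ | 0 ≤ σ ∧ ∃ φ1 ∈ Phi G π L, ∃ φ2 ∈ Phi G π L, ∀ v ∈ L, φ2 v ≤ σ * φ1 v}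

def dualObjectiveValues (G : SimpleGraph V) (π : Finset V → ℝ) (L : Finset V) : Set ℝ :=
  {val | ∃ (x : V → ℝ) (a b : Finset V → ℝ), (∀ v, 0 ≤ x v) ∧
    (∀ J ∈ L.powerset, ∀ m ∈ Mset G J, a J ≤ x ⬝ᵥ m ∧ x ⬝ᵥ m ≤ b J) ∧
    (∑ J ∈ L.powerset, marginal π L J * b J = 1) ∧
    val = ∑ J ∈ L.powerset, marginal π L J * a J}

lemma sum_marginal_mul_le_dotProduct (hπ : ∀ J, 0 ≤ π J)
    (ha : ∀ J ∈ L.powerset, ∀ m ∈ Mset G J, a J ≤ x ⬝ᵥ m) {φ : V → ℝ} (hφ : φ ∈ Phi G π L) :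
    ∑ J ∈ L.powerset, marginal π L J * a J ≤ x ⬝ᵥ φ := by
  obtain ⟨η, hη, rfl⟩ := hφ
  rw [sum_marginal_mul, dotProduct_sum]
  refine Finset.sum_le_sum fun I _ => ?_
  rw [dotProduct_smul, smul_eq_mul]
  exact mul_le_mul_of_nonneg_left
    (le_dotProduct_of_mem_CHM (ha _ (Finset.mem_powerset.2 Finset.inter_subset_right)) (hη I))
    (hπ I)

lemma dotProduct_le_sum_marginal_mul (hπ : ∀ J, 0 ≤ π J)
    (hb : ∀ J ∈ L.powerset, ∀ m ∈ Mset G J, x ⬝ᵥ m ≤ b J) {φ : V → ℝ} (hφ : φ ∈ Phi G π L) :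
    x ⬝ᵥ φ ≤ ∑ J ∈ L.powerset, marginal π L J * b J := by
  have := sum_marginal_mul_le_dotProduct (x := -x) (a := -b) hπ
    (fun J hJ m hm => by simpa [neg_dotProduct] using hb J hJ m hm) hφ
  simpa [neg_dotProduct, Finset.sum_neg_distrib] using this

lemma dualObjective_le_poolingFactor (hπ : ∀ J, 0 ≤ π J) {val σ : ℝ}
    (hval : val ∈ dualObjectiveValues G π L) (hσ : σ ∈ poolingFactors G π L) : val ≤ σ := by
  obtain ⟨x, a, b, hx, hab, hb, rfl⟩ := hval
  obtain ⟨hσ, φ1, hφ1, φ2, hφ2, hle⟩ := hσ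
  have hle' : φ2 ≤ σ • φ1 := fun v => by
    by_cases hv : v ∈ L
    · exact hle v hv
    · simp [apply_eq_zero_of_mem_Phi hφ1 hv, apply_eq_zero_of_mem_Phi hφ2 hv]
  calc ∑ J ∈ L.powerset, marginal π L J * a J
      ≤ x ⬝ᵥ φ2 := sum_marginal_mul_le_dotProduct hπ (fun J hJ m hm => (hab J hJ m hm).1) hφ2
    _ ≤ x ⬝ᵥ (σ • φ1) := dotProduct_le_dotProduct_of_nonneg_left hle' hx
    _ = σ * x ⬝ᵥ φ1 := dotProduct_smul σ x φ1
    _ ≤ σ * 1 := by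
      gcongr
      exact hb ▸ dotProduct_le_sum_marginal_mul hπ (fun J hJ m hm => (hab J hJ m hm).2) hφ1
    _ = σ := mul_one σ

lemma exists_dotProduct_lt_of_not_mem_poolingFactors {σ : ℝ} (hσ : 0 ≤ σ)
    (hσT : σ ∉ poolingFactors G π L) :
    ∃ x : V → ℝ, 0 ≤ x ∧ ∀ φ1 ∈ Phi G π L, ∀ φ2 ∈ Phi G π L, σ * x ⬝ᵥ φ1 < x ⬝ᵥ φ2 := by
  have hsep : ∀ z ∈ Phi G π L + (-σ) • Phi G π L, ∃ v ∈ L, 0 < z v := by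
    rintro _ ⟨φ2, h2, _, ⟨φ1, h1, rfl⟩, rfl⟩
    by_contra! hle
    refine hσT ⟨hσ, φ1, h1, φ2, h2, fun v hv => ?_⟩
    have := hle v hv
    simp only [Pi.add_apply, Pi.smul_apply, smul_eq_mul] at this
    linarith
  obtain ⟨x, hx, hpos⟩ := exists_nonneg_dotProduct_pos
    ((convex_Phi G π L).add ((convex_Phi G π L).smul (-σ)))
    ((isCompact_Phi G π L).add ((isCompact_Phi G π L).smul (-σ))) L hsep
  refine ⟨x, hx, fun φ1 h1 φ2 h2 => ?_⟩
  have := hpos _ (Set.add_mem_add h2 (Set.smul_mem_smul_set h1))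
  rw [dotProduct_add, dotProduct_smul, smul_eq_mul] at this
  linarith

lemma div_mem_dualObjectiveValues (hx : 0 ≤ x)
    (hab : ∀ J ∈ L.powerset, ∀ m ∈ Mset G J, a J ≤ x ⬝ᵥ m ∧ x ⬝ᵥ m ≤ b J)
    (hb : 0 < ∑ J ∈ L.powerset, marginal π L J * b J) :
    (∑ J ∈ L.powerset, marginal π L J * a J) / (∑ J ∈ L.powerset, marginal π L J * b J) ∈
      dualObjectiveValues G π L := by
  set B := ∑ J ∈ L.powerset, marginal π L J * b J
  have hB : 0 ≤ B⁻¹ := inv_nonneg.2 hb.le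
  refine ⟨B⁻¹ • x, B⁻¹ • a, B⁻¹ • b, smul_nonneg hB hx, fun J hJ m hm => ?_, ?_, ?_⟩
  · simp only [smul_dotProduct, Pi.smul_apply, smul_eq_mul]
    exact ⟨mul_le_mul_of_nonneg_left (hab J hJ m hm).1 hB,
      mul_le_mul_of_nonneg_left (hab J hJ m hm).2 hB⟩
  · simp only [Pi.smul_apply, smul_eq_mul, mul_left_comm _ B⁻¹, ← Finset.mul_sum]
    exact inv_mul_cancel₀ hb.ne'
  · simp only [Pi.smul_apply, smul_eq_mul, mul_left_comm _ B⁻¹, ← Finset.mul_sum]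
    exact div_eq_inv_mul _ _

lemma exists_mem_dualObjectiveValues_gt (hπ : ∀ J, 0 ≤ π J) {σ : ℝ} (hx : 0 ≤ x)
    (hsep : ∀ φ1 ∈ Phi G π L, ∀ φ2 ∈ Phi G π L, σ * x ⬝ᵥ φ1 < x ⬝ᵥ φ2) :
    ∃ val ∈ dualObjectiveValues G π L, σ < val := by
  choose mlo hmlo hmin using fun J =>
    (Mset G J).exists_min_image (x ⬝ᵥ ·) (Mset_finite G J) (Mset_nonempty G J)
  choose mhi hmhi hmax using fun J =>
    (Mset G J).exists_max_image (x ⬝ᵥ ·) (Mset_finite G J) (Mset_nonempty G J)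
  set A := ∑ J ∈ L.powerset, marginal π L J * x ⬝ᵥ mlo J
  set B := ∑ J ∈ L.powerset, marginal π L J * x ⬝ᵥ mhi J
  have hBA : σ * B < A := by
    simpa only [dotProduct_sum_smul_inter] using
      hsep _ (sum_smul_mem_Phi (L := L) hmhi) _ (sum_smul_mem_Phi (L := L) hmlo)
  have hA : 0 ≤ A := Finset.sum_nonneg fun J _ =>
    mul_nonneg (marginal_nonneg hπ L J)
      (dotProduct_nonneg_of_nonneg hx (nonneg_of_mem_Mset (hmlo J)))
  have hAB : A ≤ B := Finset.sum_le_sum fun J _ =>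
    mul_le_mul_of_nonneg_left (hmin J _ (hmhi J)) (marginal_nonneg hπ L J)
  have hB : 0 < B := (hA.trans hAB).lt_of_ne fun h => by
    rw [← h, mul_zero] at hBA
    linarith
  refine ⟨A / B, div_mem_dualObjectiveValues hx (fun J _ m hm => ⟨hmin J m hm, hmax J m hm⟩) hB,
    (lt_div_iff₀ hB).2 hBA⟩

end Duality

theorem flpf_dual_characterization_general {V : Type*} [Fintype V] [DecidableEq V]
    (G : SimpleGraph V) (π : Finset V → ℝ) (hπ : IsFading π)
    (L : Finset V) :
    sigmaL G π L = sSup {val : ℝ |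
      ∃ (x : V → ℝ) (a b : Finset V → ℝ),
        (∀ v, 0 ≤ x v) ∧
        (∀ J ∈ L.powerset, ∀ m ∈ Mset G J,
          a J ≤ ∑ v : V, x v * m v ∧ ∑ v : V, x v * m v ≤ b J) ∧
        (∑ J ∈ L.powerset, marginal π L J * b J = 1) ∧
        val = ∑ J ∈ L.powerset, marginal π L J * a J} := by
  change sInf (poolingFactors G π L) = sSup (dualObjectiveValues G π L)
  have hone : (1 : ℝ) ∈ poolingFactors G π L :=
    let ⟨φ, hφ⟩ := Phi_nonempty G π L
    ⟨zero_le_one, φ, hφ, φ, hφ, fun v _ => (one_mul _).ge⟩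
  have hzero : (0 : ℝ) ∈ dualObjectiveValues G π L :=
    ⟨0, 0, 1, fun _ => le_rfl, fun J _ m _ => by simp, by simpa using sum_marginal hπ.2 L, by simp⟩
  have hbdd : BddAbove (dualObjectiveValues G π L) :=
    ⟨1, fun _ h => dualObjective_le_poolingFactor hπ.1 h hone⟩
  refine le_antisymm (le_of_forall_gt_imp_ge_of_dense fun σ hσ => ?_)
    (csSup_le ⟨0, hzero⟩ fun _ h =>
      le_csInf ⟨1, hone⟩ fun _ => dualObjective_le_poolingFactor hπ.1 h)
  by_cases hσT : σ ∈ poolingFactors G π L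
  · exact csInf_le ⟨0, fun _ h => h.1⟩ hσT
  · obtain ⟨x, hx, hsep⟩ :=
      exists_dotProduct_lt_of_not_mem_poolingFactors ((le_csSup hbdd hzero).trans hσ.le) hσT
    obtain ⟨val, hval, hlt⟩ := exists_mem_dualObjectiveValues_gt hπ.1 hx hsep
    exact absurd (le_csSup hbdd hval) (by linarith)

/-- **Lemma 2 (Dual characterization of the fading local pooling factor).**
`σ*_L(π)` equals the optimal value of:
maximize `Σ_{J⊆L} π_L(J) a(J)` over `x ≥ 0`, `(a(J))`, `(b(J))` subject to
`a(J) ≤ ⟨x, m⟩ ≤ b(J)` for every `J ⊆ L` and every `m ∈ M_{J,L}`, and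
`Σ_{J⊆L} π_L(J) b(J) = 1`. -/
theorem flpf_dual_characterization {V : Type*} [Fintype V] [DecidableEq V]
    (G : SimpleGraph V) (π : Finset V → ℝ) (hπ : IsFading π)
    (L : Finset V) (hL : L.Nonempty) :
    sigmaL G π L = sSup {val : ℝ |
      ∃ (x : V → ℝ) (a b : Finset V → ℝ),
        (∀ v, 0 ≤ x v) ∧
        (∀ J ∈ L.powerset, ∀ m ∈ Mset G J,
          a J ≤ ∑ v : V, x v * m v ∧ ∑ v : V, x v * m v ≤ b J) ∧
        (∑ J ∈ L.powerset, marginal π L J * b J = 1) ∧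
        val = ∑ J ∈ L.powerset, marginal π L J * a J} :=
  flpf_dual_characterization_general G π hπ L
end

section
/- Let G be a finite simple graph with interference degree d_I(G). Then for every maximal independent set S of G and every independent set T of G, |T| ≤ d_I(G)·|S|. In particular, for any induced subgraph, the minimum cardinality of a maximal independent set is at least the maximum cardinality of an independent set divided by d_I(G). -/
open scoped BigOperators
open Filter MeasureTheory ProbabilityTheory

private lemma bdd_cards {V : Type*} [Fintype V] (P : Set (Finset V)) :
    BddAbove (Finset.card '' P) :=
  ⟨Fintype.card V, by rintro _ ⟨S, _, rfl⟩; exact Finset.card_le_univ S⟩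

private lemma dI_le_dIG {V : Type*} [Fintype V] (G : SimpleGraph V) (l : V) :
    dI G l ≤ dIG G := by
  apply le_csSup _ (Set.mem_range_self l)
  refine ⟨Fintype.card V, ?_⟩
  rintro _ ⟨v, rfl⟩
  refine csSup_le ⟨0, ⟨(∅ : Finset V), ⟨by simp, by simp⟩, rfl⟩⟩ ?_
  rintro _ ⟨S, _, rfl⟩; exact Finset.card_le_univ S

private lemma key_indep_bound {V : Type*} [Fintype V] [DecidableEq V] (G : SimpleGraph V)
    (J S T : Finset V) (hS : IsMaxIndepIn G J S) (hT : IsIndepIn G J T) :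
    T.card ≤ dIG G * S.card := by
  classical
  have hchoose : ∀ t ∈ T, ∃ s ∈ S, t = s ∨ G.Adj s t := by
    intro t htT
    by_contra h
    push_neg at h
    have hind : IsIndepIn G J (insert t S) := by
      refine ⟨?_, ?_⟩
      · intro x hx
        rcases Finset.mem_insert.mp hx with rfl | hx
        · exact hT.1 htT
        · exact hS.1.1 hx
      · intro u hu v hv
        rcases Finset.mem_insert.mp hu with hu' | hu' <;>
          rcases Finset.mem_insert.mp hv with hv' | hv' <;> subst_vars
        · exact G.irrefl
        · intro hadj; exact (h v hv').2 hadj.symm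
        · intro hadj; exact (h u hu').2 hadj
        · exact hS.1.2 u hu' v hv'
    have heq := hS.2 _ hind (Finset.subset_insert t S)
    have htS : t ∈ S := heq ▸ Finset.mem_insert_self t S
    exact (h t htS).1 rfl
  set f : V → V := fun t => if h : ∃ s ∈ S, t = s ∨ G.Adj s t then h.choose else t with hf
  have hfS : ∀ t ∈ T, f t ∈ S := by
    intro t ht
    simp only [hf]
    rw [dif_pos (hchoose t ht)]
    exact (hchoose t ht).choose_spec.1
  have hfrel : ∀ t ∈ T, t = f t ∨ G.Adj (f t) t := by
    intro t ht
    simp only [hf]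
    rw [dif_pos (hchoose t ht)]
    exact (hchoose t ht).choose_spec.2
  rw [Finset.card_eq_sum_card_fiberwise hfS]
  calc ∑ s ∈ S, (T.filter fun t => f t = s).card
      ≤ ∑ _s ∈ S, dIG G := by
        apply Finset.sum_le_sum
        intro s _hs
        have h1 : (T.filter fun t => f t = s).card ≤ dI G s := by
          apply le_csSup (bdd_cards _)
          refine ⟨T.filter fun t => f t = s, ⟨?_, ?_⟩, rfl⟩
          · intro u hu v hv
            exact hT.2 u (Finset.mem_filter.mp hu).1 v (Finset.mem_filter.mp hv).1
          · intro v hv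
            obtain ⟨hvT, hfv⟩ := Finset.mem_filter.mp hv
            rcases hfrel v hvT with h' | h'
            · left; rw [h', hfv]
            · right; rw [← hfv]; exact h'
        exact h1.trans (dI_le_dIG G s)
    _ = dIG G * S.card := by rw [Finset.sum_const, smul_eq_mul, mul_comm]

private lemma exists_maxIndep {V : Type*} [Fintype V] [DecidableEq V] (G : SimpleGraph V)
    (J : Finset V) : ∃ S, IsMaxIndepIn G J S := by
  have hne : (Finset.card '' {S | IsIndepIn G J S}).Nonempty :=
    ⟨0, (∅ : Finset V), ⟨Finset.empty_subset J, by simp⟩, rfl⟩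
  obtain ⟨S, hSind, hcard⟩ := Nat.sSup_mem hne (bdd_cards _)
  refine ⟨S, hSind, fun T hT hsub => ?_⟩
  exact Finset.eq_of_subset_of_card_le hsub
    (by rw [hcard]; exact le_csSup (bdd_cards _) ⟨T, hT, rfl⟩)

/-- For every maximal independent set `S` of `G` and every independent set `T` of `G`,
`|T| ≤ d_I(G)·|S|`; in particular, in any induced subgraph the minimum cardinality of
a maximal independent set is at least the maximum cardinality of an independent set
divided by `d_I(G)`. -/
theorem indep_card_le_dI_mul_maximal {V : Type*} [Fintype V] [DecidableEq V]
    (G : SimpleGraph V) :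
    (∀ S T : Finset V, IsMaxIndepIn G Finset.univ S → IsIndepIn G Finset.univ T →
      T.card ≤ dIG G * S.card) ∧
    (∀ J : Finset V, sSup (Finset.card '' {T | IsIndepIn G J T}) ≤ dIG G * nM G J) := by
  constructor
  · intro S T hS hT
    exact key_indep_bound G Finset.univ S T hS hT
  · intro J
    obtain ⟨S0, hS0⟩ := exists_maxIndep G J
    have hnM : (Finset.card '' {S | IsMaxIndepIn G J S}).Nonempty :=
      ⟨S0.card, S0, hS0, rfl⟩
    obtain ⟨S, hSmax, hScard⟩ := Nat.sInf_mem hnM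
    have hne : (Finset.card '' {T | IsIndepIn G J T}).Nonempty :=
      ⟨0, (∅ : Finset V), ⟨Finset.empty_subset J, by simp⟩, rfl⟩
    obtain ⟨T, hTind, hTcard⟩ := Nat.sSup_mem hne (bdd_cards _)
    rw [← hTcard, nM, ← hScard]
    exact key_indep_bound G J S T hSmax hTind
end

section
/- Consider the network with links K = {a, b, c} whose interference graph G has exactly the edges {a,b} and {b,c}, and the fading structure π with π({a,b}) = π({b,c}) = π({a,b,c}) = 1/3 and π(J) = 0 for all other J ⊆ K. Then: (i) there exist vectors η_J ∈ CH(M_{J,K}) such that the vector (0, 5/6, 0) satisfies (0, 5/6, 0) ≤ Σ_{J⊆K, J≠∅} (1/d_I(J))·π(J)·η_J componentwise, where d_I({a,b}) = d_I({b,c}) = 1 and d_I({a,b,c}) = 2; and (ii) for every λ ∈ Λ_f one has λ_b ≤ 1, so every vector in (4/5)·Λ_f has b-coordinate at most 4/5 < 5/6. Hence the region Λ_f(x) with x(J) = 1/d_I(J) is not contained in (4/5)·Λ_f. -/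
open scoped BigOperators
open Filter MeasureTheory ProbabilityTheory

open scoped Pointwise

/-- The 3-link path network `a - b - c` (links `0,1,2`, edges `{0,1}` and `{1,2}`). -/
def Gpath : SimpleGraph (Fin 3) :=
  SimpleGraph.fromRel (fun u v => (u = 0 ∧ v = 1) ∨ (u = 1 ∧ v = 2))

/-- The fading structure of Example B: `π({a,b}) = π({b,c}) = π({a,b,c}) = 1/3`. -/
noncomputable def piPath : Finset (Fin 3) → ℝ := fun J =>
  if J = {0, 1} ∨ J = {1, 2} ∨ J = {0, 1, 2} then 1 / 3 else 0

section AuxB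

instance : DecidableRel Gpath.Adj := fun u v =>
  decidable_of_iff (u ≠ v ∧ (((u = 0 ∧ v = 1) ∨ (u = 1 ∧ v = 2)) ∨ ((v = 0 ∧ u = 1) ∨ (v = 1 ∧ u = 2))))
    (by rw [Gpath, SimpleGraph.fromRel_adj])

/-- a canonical maximal independent set of `J` -/
def misB (J : Finset (Fin 3)) : Finset (Fin 3) := if 1 ∈ J then {1} else J

/-- an alternative maximal independent set of `J` -/
def misB2 (J : Finset (Fin 3)) : Finset (Fin 3) := if (J \ {1}).Nonempty then J \ {1} else J

lemma misB_max : ∀ J, IsMaxIndepIn Gpath J (misB J) := by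
  simp only [IsMaxIndepIn, IsIndepIn]; decide

lemma misB2_max : ∀ J, IsMaxIndepIn Gpath J (misB2 J) := by
  simp only [IsMaxIndepIn, IsIndepIn]; decide

lemma indVec_mem_CHM {J S : Finset (Fin 3)} (h : IsMaxIndepIn Gpath J S) :
    indVec S ∈ CHM Gpath J :=
  subset_convexHull ℝ _ ⟨S, h, rfl⟩

lemma comb_mem_CHM {J S T : Finset (Fin 3)} (hS : IsMaxIndepIn Gpath J S)
    (hT : IsMaxIndepIn Gpath J T) {a b : ℝ} (ha : 0 ≤ a) (hb : 0 ≤ b) (hab : a + b = 1) :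
    a • indVec S + b • indVec T ∈ CHM Gpath J :=
  (convex_convexHull ℝ _) (indVec_mem_CHM hS) (indVec_mem_CHM hT) ha hb hab

lemma sum3 (f : Finset (Fin 3) → ℝ)
    (h : ∀ J, J ≠ {0,1} → J ≠ {1,2} → J ≠ {0,1,2} → f J = 0) :
    ∑ J : Finset (Fin 3), f J = f {0,1} + f {1,2} + f {0,1,2} := by
  have key : ∑ J ∈ ({{0,1},{1,2},{0,1,2}} : Finset (Finset (Fin 3))), f J
      = ∑ J : Finset (Fin 3), f J := by
    apply Finset.sum_subset (Finset.subset_univ _)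
    intro J _ hJ
    simp only [Finset.mem_insert, Finset.mem_singleton] at hJ
    push_neg at hJ
    exact h J hJ.1 hJ.2.1 hJ.2.2
  rw [← key, Finset.sum_insert (by decide), Finset.sum_insert (by decide),
    Finset.sum_singleton]
  ring

lemma piPath_zero {J : Finset (Fin 3)} (h1 : J ≠ {0,1}) (h2 : J ≠ {1,2})
    (h3 : J ≠ {0,1,2}) : piPath J = 0 := by
  rw [piPath, if_neg]; tauto

lemma piPath_nonneg (J : Finset (Fin 3)) : 0 ≤ piPath J := by
  rw [piPath]; split <;> norm_num

lemma piPath_v1 : piPath {0,1} = 1/3 := by rw [piPath, if_pos]; left; rfl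
lemma piPath_v2 : piPath {1,2} = 1/3 := by rw [piPath, if_pos]; right; left; rfl
lemma piPath_v3 : piPath {0,1,2} = 1/3 := by rw [piPath, if_pos]; right; right; rfl

lemma chm_bounds {J : Finset (Fin 3)} {f : Fin 3 → ℝ} (hf : f ∈ CHM Gpath J) :
    ∀ v, 0 ≤ f v ∧ f v ≤ 1 := by
  have hsub : Mset Gpath J ⊆ {g : Fin 3 → ℝ | ∀ v, 0 ≤ g v ∧ g v ≤ 1} := by
    rintro g ⟨S, _, rfl⟩ v
    unfold indVec; split <;> norm_num
  have hconv : Convex ℝ {g : Fin 3 → ℝ | ∀ v, 0 ≤ g v ∧ g v ≤ 1} := by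
    intro x hx y hy a b ha hb hab v
    have h1 := hx v; have h2 := hy v
    simp only [Pi.add_apply, Pi.smul_apply, smul_eq_mul]
    constructor
    · nlinarith [h1.1, h2.1]
    · nlinarith [h1.2, h2.2]
  exact convexHull_min hsub hconv hf

lemma dISet_v1 : dISet Gpath {0,1} = 1 := by
  apply le_antisymm
  · apply csSup_le
    · exact ⟨1, ({0} : Finset (Fin 3)), ⟨by decide, by decide, 0, by decide, by decide⟩, rfl⟩
    rintro n ⟨T, ⟨hT1, hT2, -⟩, rfl⟩
    revert hT1 hT2; revert T; decide
  · apply le_csSup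
    · exact ⟨3, by rintro n ⟨T, -, rfl⟩; exact le_trans (Finset.card_le_univ T) (by decide)⟩
    · exact ⟨({0} : Finset (Fin 3)), by refine ⟨by decide, by decide, 0, by decide, by decide⟩, rfl⟩

lemma dISet_v2 : dISet Gpath {1,2} = 1 := by
  apply le_antisymm
  · apply csSup_le
    · exact ⟨1, ({1} : Finset (Fin 3)), ⟨by decide, by decide, 1, by decide, by decide⟩, rfl⟩
    rintro n ⟨T, ⟨hT1, hT2, -⟩, rfl⟩
    revert hT1 hT2; revert T; decide
  · apply le_csSup
    · exact ⟨3, by rintro n ⟨T, -, rfl⟩; exact le_trans (Finset.card_le_univ T) (by decide)⟩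
    · exact ⟨({1} : Finset (Fin 3)), by refine ⟨by decide, by decide, 1, by decide, by decide⟩, rfl⟩

lemma dISet_v3 : dISet Gpath {0,1,2} = 2 := by
  apply le_antisymm
  · apply csSup_le
    · exact ⟨2, ({0,2} : Finset (Fin 3)), ⟨by decide, by decide, 1, by decide, by decide⟩, rfl⟩
    rintro n ⟨T, ⟨hT1, hT2, -⟩, rfl⟩
    revert hT1 hT2; revert T; decide
  · apply le_csSup
    · exact ⟨3, by rintro n ⟨T, -, rfl⟩; exact le_trans (Finset.card_le_univ T) (by decide)⟩
    · exact ⟨({0,2} : Finset (Fin 3)), by refine ⟨by decide, by decide, 1, by decide, by decide⟩, rfl⟩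

end AuxB

lemma mB1 : misB {0,1} = {1} := by decide
lemma mB2 : misB {1,2} = {1} := by decide
lemma mB3 : misB {0,1,2} = {1} := by decide
lemma mB1' : misB2 {0,1} = {0} := by decide
lemma mB2' : misB2 {1,2} = {2} := by decide
lemma mB3' : misB2 {0,1,2} = {0,2} := by decide

/-- **Counterexample on regions.** For Example B: `d_I({a,b}) = d_I({b,c}) = 1`,
`d_I({a,b,c}) = 2`; the vector `(0, 5/6, 0)` is dominated by
`Σ_{J≠∅} (1/d_I(J)) π(J) η_J` for suitable `η_J ∈ CH(M_{J,K})`; every `λ ∈ Λ_f` has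
`λ_b ≤ 1`, so every vector of `(4/5)·Λ_f` has `b`-coordinate at most `4/5 < 5/6`;
hence `Λ_f(x)` with `x(J) = 1/d_I(J)` is not contained in `(4/5)·Λ_f`. -/
theorem example_B_region_not_contained :
    dISet Gpath {0, 1} = 1 ∧ dISet Gpath {1, 2} = 1 ∧ dISet Gpath {0, 1, 2} = 2 ∧
    (∃ η : Finset (Fin 3) → Fin 3 → ℝ, (∀ J, η J ∈ CHM Gpath J) ∧
      ∀ v : Fin 3, (if v = 1 then (5 / 6 : ℝ) else 0) ≤
        ∑ J : Finset (Fin 3), (dISet Gpath J : ℝ)⁻¹ * piPath J * η J v) ∧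
    (∀ lam ∈ LambdaF Gpath piPath, lam 1 ≤ 1) ∧
    (∀ lam ∈ (4 / 5 : ℝ) • LambdaF Gpath piPath, lam 1 ≤ 4 / 5) ∧
    ((4 : ℝ) / 5 < 5 / 6) ∧
    ¬ (LambdaX Gpath piPath (fun J => (dISet Gpath J : ℝ)⁻¹) ⊆
        (4 / 5 : ℝ) • LambdaF Gpath piPath) := by
  have hd1 := dISet_v1; have hd2 := dISet_v2; have hd3 := dISet_v3
  have P3 : ∀ lam ∈ LambdaF Gpath piPath, lam 1 ≤ 1 := by
    rintro lam ⟨hpos, η, hη, hle⟩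
    have h1 : lam 1 ≤ ∑ J : Finset (Fin 3), piPath J * η J 1 := hle 1
    have h2 : ∑ J : Finset (Fin 3), piPath J * η J 1 ≤ ∑ J : Finset (Fin 3), piPath J * 1 :=
      Finset.sum_le_sum (fun J _ =>
        mul_le_mul_of_nonneg_left ((chm_bounds (hη J) 1).2) (piPath_nonneg J))
    have h3 : ∑ J : Finset (Fin 3), piPath J * 1 = 1 := by
      rw [sum3 _ (fun J a b c => by rw [piPath_zero a b c]; ring),
        piPath_v1, piPath_v2, piPath_v3]
      norm_num
    linarith
  have P4 : ∀ lam ∈ (4 / 5 : ℝ) • LambdaF Gpath piPath, lam 1 ≤ 4 / 5 := by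
    intro lam hlam
    obtain ⟨μ, hμ, rfl⟩ := hlam
    have := P3 μ hμ
    simp only [Pi.smul_apply, smul_eq_mul]
    linarith
  refine ⟨hd1, hd2, hd3, ?_, P3, P4, by norm_num, ?_⟩
  · refine ⟨fun J => indVec (misB J), fun J => indVec_mem_CHM (misB_max J), fun v => ?_⟩
    rw [sum3 _ (fun J a b c => by rw [piPath_zero a b c]; ring)]
    beta_reduce
    rw [hd1, hd2, hd3, piPath_v1, piPath_v2, piPath_v3, mB1, mB2, mB3]
    fin_cases v <;> norm_num [indVec, Fin.ext_iff]
  · intro hsub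
    have hmem : (fun v : Fin 3 => if v = 1 then (49/60 : ℝ) else 1/100) ∈
        LambdaX Gpath piPath (fun J => (dISet Gpath J : ℝ)⁻¹) := by
      refine ⟨fun v => by dsimp only; split <;> norm_num,
        fun J => (49/50 : ℝ) • indVec (misB J) + (1/50 : ℝ) • indVec (misB2 J),
        fun J => comb_mem_CHM (misB_max J) (misB2_max J) (by norm_num) (by norm_num)
          (by norm_num), fun v => ?_⟩
      rw [sum3 _ (fun J a b c => by rw [piPath_zero a b c]; ring)]
      beta_reduce
      rw [hd1, hd2, hd3, piPath_v1, piPath_v2, piPath_v3, mB1, mB2, mB3, mB1', mB2', mB3']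
      fin_cases v <;>
        norm_num [indVec, Fin.ext_iff, Pi.add_apply, Pi.smul_apply, smul_eq_mul]
    have := P4 _ (hsub hmem)
    norm_num at this
end
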